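/- Let k ≥ 1 be an integer and let a be a real number with a > (k−1)/k. Then Q_k(a) > 0, where Q_k(a) denotes the determinant of the k×k tridiagonal matrix with first diagonal entry a, all other diagonal entries 2, all sub- and super-diagonal entries −1, and all other entries 0. -/

import Mathlib

/-!
Expanding along the first row, and the resulting minor along its first column, gives
`Q_{k+2}(a) = a Q_{k+1}(2) - Q_k(2)`, since the minors of the tridiagonal matrix are again of
the same shape with corner entry `2`. Induction then yields `Q_k(a) = k a - (k - 1)`
(including `Q_0 = 1`), which is positive exactly when `a > (k - 1) / k`.
-/

/-- `Qdet k a` is the determinant of the `k × k` tridiagonal matrix whose first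
diagonal entry is `a`, all other diagonal entries are `2`, all sub- and
super-diagonal entries are `-1`, and all remaining entries are `0`. -/
def Qdet (k : ℕ) (a : ℝ) : ℝ :=
  (Matrix.of fun i j : Fin k =>
    if i = j then (if i.val = 0 then a else 2)
    else if i.val + 1 = j.val ∨ j.val + 1 = i.val then -1 else 0).det

namespace Matrix

theorem det_succ_succ_of_tridiagonal_corner {R : Type*} [CommRing R] {n : ℕ}
    (A : Matrix (Fin (n + 2)) (Fin (n + 2)) R)
    (hrow : ∀ j : Fin n, A 0 j.succ.succ = 0) (hcol : ∀ i : Fin n, A i.succ.succ 0 = 0) :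
    A.det = A 0 0 * (A.submatrix Fin.succ Fin.succ).det -
      A 0 1 * A 1 0 * ((A.submatrix Fin.succ Fin.succ).submatrix Fin.succ Fin.succ).det := by
  have hminor : (A.submatrix Fin.succ (Fin.succAbove 1)).det =
      A 1 0 * ((A.submatrix Fin.succ Fin.succ).submatrix Fin.succ Fin.succ).det := by
    rw [det_succ_column_zero, Fin.sum_univ_succ]
    simp [hcol, submatrix_submatrix, Function.comp_def]
  rw [det_succ_row_zero, Fin.sum_univ_succ, Fin.sum_univ_succ]
  simp [hrow, hminor]
  ring

end Matrix

def qMatrix (k : ℕ) (a : ℝ) : Matrix (Fin k) (Fin k) ℝ :=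
  Matrix.of fun i j : Fin k =>
    if i = j then (if i.val = 0 then a else 2)
    else if i.val + 1 = j.val ∨ j.val + 1 = i.val then -1 else 0

theorem Qdet_eq_det_qMatrix (k : ℕ) (a : ℝ) : Qdet k a = (qMatrix k a).det := rfl

theorem qMatrix_submatrix_succ_succ (k : ℕ) (a : ℝ) :
    (qMatrix (k + 1) a).submatrix Fin.succ Fin.succ = qMatrix k 2 := by
  ext i j
  simp only [qMatrix, Matrix.submatrix_apply, Matrix.of_apply, Fin.ext_iff, Fin.val_succ,
    Nat.add_right_cancel_iff, Nat.add_one_ne_zero, ↓reduceIte, ite_self]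

theorem Qdet_add_two (k : ℕ) (a : ℝ) : Qdet (k + 2) a = a * Qdet (k + 1) 2 - Qdet k 2 := by
  simp only [Qdet_eq_det_qMatrix]
  rw [Matrix.det_succ_succ_of_tridiagonal_corner _ ?_ ?_,
    qMatrix_submatrix_succ_succ, qMatrix_submatrix_succ_succ]
  · simp [qMatrix]
  · intro j
    simp [qMatrix, (Fin.succ_ne_zero _).symm]
  · intro i
    simp [qMatrix]

theorem Qdet_eq_mul_sub (k : ℕ) (a : ℝ) : Qdet k a = k * a - (k - 1) := by
  induction k using Nat.twoStepInduction generalizing a with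
  | zero => simp [Qdet_eq_det_qMatrix]
  | one => simp [Qdet_eq_det_qMatrix, qMatrix]
  | more k ih₀ ih₁ =>
    rw [Qdet_add_two, ih₀, ih₁]
    push_cast
    ring

theorem stmt7_general (k : ℕ) (a : ℝ) (ha : a > ((k : ℝ) - 1) / (k : ℝ)) :
    Qdet k a > 0 := by
  rw [Qdet_eq_mul_sub]
  rcases Nat.eq_zero_or_pos k with rfl | hk
  · norm_num
  · rw [gt_iff_lt, div_lt_iff₀ (by exact_mod_cast hk)] at ha
    linarith

theorem stmt7 (k : ℕ) (hk : 1 ≤ k) (a : ℝ) (ha : a > ((k : ℝ) - 1) / (k : ℝ)) :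
    Qdet k a > 0 :=
  stmt7_general k a ha
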